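/- arXiv:1712.05538 — 3 statements merged into one kernel-verified Lean document; each statement's English description precedes it below -/
import Mathlib

section
/- Let G be a finite connected bipartite simple graph with at least one edge. Let ôdiam := max over all pairs of vertices u, v of Ô(u,v), and let Δ := max, over all quadruples of vertices (i, i', j, j') with i adjacent to i' and j adjacent to j', of min{Ô(i,j), Ô(i,j'), Ô(i',j), Ô(i',j')}. Then Δ = ôdiam − 1 if and only if there exist vertices i, i', j, j' with i adjacent to i' and j adjacent to j' such that Ô(i,j) = ôdiam and Ô(i',j') = ôdiam; otherwise Δ = ôdiam − 2. -/
/-- The oriented distance: the graph distance plus one. -/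
noncomputable def orientedDist {α : Type*} (G : SimpleGraph α) (u v : α) : ℕ :=
  G.dist u v + 1

/-- `ôdiam`: the maximum oriented distance over all pairs of vertices. -/
noncomputable def oDiam {α : Type*} (G : SimpleGraph α) : ℕ :=
  sSup {m : ℕ | ∃ u v : α, orientedDist G u v = m}

/-- The minimum of the four oriented distances determined by a quadruple `(i,i',j,j')`. -/
noncomputable def quadMin {α : Type*} (G : SimpleGraph α) (i i' j j' : α) : ℕ :=
  min (min (orientedDist G i j) (orientedDist G i j'))
    (min (orientedDist G i' j) (orientedDist G i' j'))

/-- `Δ`: the maximum, over all quadruples `(i,i',j,j')` with `i` adjacent to `i'` and `j`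
adjacent to `j'`, of `min{Ô(i,j), Ô(i,j'), Ô(i',j), Ô(i',j')}`. -/
noncomputable def linkDiam {α : Type*} (G : SimpleGraph α) : ℕ :=
  sSup {m : ℕ | ∃ i i' j j' : α, G.Adj i i' ∧ G.Adj j j' ∧ quadMin G i i' j j' = m}

lemma walk_parity' {α : Type*} {G : SimpleGraph α} (c : G.Coloring (Fin 2))
    {u v : α} (p : G.Walk u v) : c u = c v ↔ Even p.length := by
  induction p with
  | nil => simp
  | @cons u w v h p ih =>
    have h1 : c u ≠ c w := c.valid h
    have key : ∀ x y z : Fin 2, x ≠ y → (x = z ↔ ¬ y = z) := by decide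
    simp only [SimpleGraph.Walk.length_cons, Nat.even_add_one]
    rw [key _ _ _ h1]
    exact not_congr ih

/-- Diameter dichotomy: `Δ = ôdiam − 1` iff there exist vertices `i,i',j,j'` with
`i` adjacent to `i'` and `j` adjacent to `j'` such that `Ô(i,j) = ôdiam` and
`Ô(i',j') = ôdiam`; otherwise `Δ = ôdiam − 2`. -/
theorem linkDiam_dichotomy {α : Type*} [Fintype α] (G : SimpleGraph α)
    (hconn : G.Connected) (hbip : G.Colorable 2) (hedge : G.edgeSet.Nonempty) :
    (linkDiam G + 1 = oDiam G ↔
      ∃ i i' j j' : α, G.Adj i i' ∧ G.Adj j j' ∧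
        orientedDist G i j = oDiam G ∧ orientedDist G i' j' = oDiam G) ∧
    ((¬ ∃ i i' j j' : α, G.Adj i i' ∧ G.Adj j j' ∧
        orientedDist G i j = oDiam G ∧ orientedDist G i' j' = oDiam G) →
      linkDiam G + 2 = oDiam G) := by
  classical
  have hadj0 : ∃ x y : α, G.Adj x y := by
    obtain ⟨e, he⟩ := hedge
    induction e using Sym2.ind with
    | _ x y => exact ⟨x, y, he⟩
  obtain ⟨x0, y0, hx0y0⟩ := hadj0
  have c : G.Coloring (Fin 2) := hbip.some
  set N := oDiam G with hN
  have hOset : {m : ℕ | ∃ u v : α, orientedDist G u v = m} =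
      Set.range (fun p : α × α => orientedDist G p.1 p.2) := by
    ext m
    simp [eq_comm]
  have hObdd : BddAbove {m : ℕ | ∃ u v : α, orientedDist G u v = m} := by
    rw [hOset]; exact (Set.finite_range _).bddAbove
  have hle : ∀ u v : α, orientedDist G u v ≤ N :=
    fun u v => le_csSup hObdd ⟨u, v, rfl⟩
  have hNattain : ∃ u v : α, orientedDist G u v = N :=
    Nat.sSup_mem (s := {m : ℕ | ∃ u v : α, orientedDist G u v = m}) ⟨_, x0, y0, rfl⟩ hObdd
  have hpar : ∀ u v : α, (c u = c v ↔ Even (G.dist u v)) := by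
    intro u v
    obtain ⟨p, hp⟩ := (hconn.preconnected u v).exists_walk_length_eq_dist
    rw [← hp]; exact walk_parity' c p
  have hne : ∀ i j j' : α, G.Adj j j' → G.dist i j ≠ G.dist i j' := by
    intro i j j' h hEq
    have h1 := hpar i j
    have h2 := hpar i j'
    rw [hEq] at h1
    have h3 : c i = c j ↔ c i = c j' := h1.trans h2.symm
    have h4 : c j ≠ c j' := c.valid h
    revert h3 h4
    generalize c i = x; generalize c j = y; generalize c j' = z
    revert x y z; decide
  have hd1 : ∀ i j j' : α, G.Adj j j' → G.dist i j ≤ G.dist i j' + 1 := by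
    intro i j j' h
    have := hconn.dist_triangle (u := i) (v := j') (w := j)
    have hjj : G.dist j' j = 1 := SimpleGraph.dist_eq_one_iff_adj.mpr h.symm
    omega
  have hne' : ∀ i i' j : α, G.Adj i i' → G.dist i j ≠ G.dist i' j := by
    intro i i' j h
    have := hne j i i' h
    rwa [SimpleGraph.dist_comm (u := j) (v := i), SimpleGraph.dist_comm (u := j) (v := i')] at this
  have hd1' : ∀ i i' j : α, G.Adj i i' → G.dist i j ≤ G.dist i' j + 1 := by
    intro i i' j h
    have := hd1 j i i' h
    rwa [SimpleGraph.dist_comm (u := j) (v := i), SimpleGraph.dist_comm (u := j) (v := i')] at this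
  have hN2 : 2 ≤ N := by
    have h0 := hle x0 y0
    have h1 : G.dist x0 y0 = 1 := SimpleGraph.dist_eq_one_iff_adj.mpr hx0y0
    simp only [orientedDist] at h0
    omega
  have hnbr : ∀ v : α, ∃ w : α, G.Adj v w := by
    intro v
    obtain ⟨p⟩ := hconn.preconnected v x0
    cases p with
    | nil => exact ⟨y0, hx0y0⟩
    | cons h _ => exact ⟨_, h⟩
  have hcore : ∀ i i' j j' : α, G.Adj i i' → G.Adj j j' → quadMin G i i' j j' + 1 ≤ N := by
    intro i i' j j' hii hjj
    have h1 := hle i j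
    have h2 := hle i j'
    have h3 := hne i j j' hjj
    simp only [quadMin, orientedDist] at *
    omega
  have hLne : {m : ℕ | ∃ i i' j j' : α, G.Adj i i' ∧ G.Adj j j' ∧ quadMin G i i' j j' = m}.Nonempty :=
    ⟨_, x0, y0, x0, y0, hx0y0, hx0y0, rfl⟩
  have hLbdd : BddAbove {m : ℕ | ∃ i i' j j' : α, G.Adj i i' ∧ G.Adj j j' ∧ quadMin G i i' j j' = m} := by
    refine ⟨N, fun m hm => ?_⟩
    obtain ⟨i, i', j, j', hii, hjj, rfl⟩ := hm
    have := hcore i i' j j' hii hjj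
    omega
  have hLattain : ∃ i i' j j' : α, G.Adj i i' ∧ G.Adj j j' ∧ quadMin G i i' j j' = linkDiam G :=
    Nat.sSup_mem hLne hLbdd
  have hLle : linkDiam G + 1 ≤ N := by
    obtain ⟨i, i', j, j', hii, hjj, h⟩ := hLattain
    have := hcore i i' j j' hii hjj
    omega
  have hLge : ∀ i i' j j' : α, G.Adj i i' → G.Adj j j' → quadMin G i i' j j' ≤ linkDiam G := by
    intro i i' j j' hii hjj
    exact le_csSup hLbdd ⟨i, i', j, j', hii, hjj, rfl⟩
  have fwd : linkDiam G + 1 = N → ∃ i i' j j' : α, G.Adj i i' ∧ G.Adj j j' ∧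
      orientedDist G i j = N ∧ orientedDist G i' j' = N := by
    intro hL
    obtain ⟨i, i', j, j', hii, hjj, hq⟩ := hLattain
    have ha := hle i j
    have hb := hle i j'
    have hc := hle i' j
    have he := hle i' j'
    have n1 := hne i j j' hjj
    have n2 := hne i' j j' hjj
    have n3 := hne' i i' j hii
    have n4 := hne' i i' j' hii
    simp only [quadMin, orientedDist] at hq ha hb hc he ⊢
    have hsplit : (G.dist i j + 1 = N ∧ G.dist i' j' + 1 = N) ∨
           (G.dist i j' + 1 = N ∧ G.dist i' j + 1 = N) := by omega
    rcases hsplit with ⟨h1, h2⟩ | ⟨h1, h2⟩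
    · exact ⟨i, i', j, j', hii, hjj, h1, h2⟩
    · exact ⟨i, i', j', j, hii, hjj.symm, h1, h2⟩
  have bwd : (∃ i i' j j' : α, G.Adj i i' ∧ G.Adj j j' ∧
      orientedDist G i j = N ∧ orientedDist G i' j' = N) → linkDiam G + 1 = N := by
    rintro ⟨i, i', j, j', hii, hjj, h1, h2⟩
    have hb := hle i j'
    have hc := hle i' j
    have d1 := hd1 i j j' hjj
    have d2 := hd1' i i' j hii
    have n1 := hne i j j' hjj
    have hq := hLge i i' j j' hii hjj
    simp only [quadMin, orientedDist] at h1 h2 hb hc hq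
    omega
  have hge2 : N ≤ linkDiam G + 2 := by
    obtain ⟨u, v, huv⟩ := hNattain
    obtain ⟨u', hu'⟩ := hnbr u
    obtain ⟨v', hv'⟩ := hnbr v
    have hq := hLge u u' v v' hu' hv'
    have d1 := hd1 u v v' hv'
    have d2 := hd1' u u' v hu'
    have d3 := hd1 u' v v' hv'
    simp only [quadMin, orientedDist] at huv hq
    omega
  refine ⟨⟨fwd, bwd⟩, ?_⟩
  intro hno
  have hne0 : linkDiam G + 1 ≠ N := fun h => hno (fwd h)
  omega
end

section
/- Assume P, H, V, Θ and Ô are as in the context. Let p, q ∈ P be such that no single member of H ∪ V contains both p and q. Then rld(p,q) = min{ Ô(i,j) : i, j ∈ H ∪ V, p ∈ i, q ∈ j }. (In the paper's setting, where p lies in exactly one member i of H and one member i' of V and q lies in exactly one member j of H and one member j' of V, this minimum equals min{Ô(i,j), Ô(i,j'), Ô(i',j), Ô(i',j')}.) -/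
/-- A segment with endpoints `p` and `q` is axis-parallel: horizontal (equal
`y`-coordinates) or vertical (equal `x`-coordinates). -/
def AxisParallel (p q : ℝ × ℝ) : Prop := p.2 = q.2 ∨ p.1 = q.1

/-- `f` describes a rectilinear path from `p` to `q` in `P` with `k ≥ 1` links:
`f 0 = p`, `f k = q`, and each closed segment from `f t` to `f (t+1)` is contained
in `P` and is axis-parallel. -/
def IsRectPath (P : Set (ℝ × ℝ)) (p q : ℝ × ℝ) (k : ℕ) (f : ℕ → ℝ × ℝ) : Prop :=
  1 ≤ k ∧ f 0 = p ∧ f k = q ∧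
    ∀ t < k, segment ℝ (f t) (f (t + 1)) ⊆ P ∧ AxisParallel (f t) (f (t + 1))

/-- The rectilinear link distance: the minimum link length of a rectilinear path
from `p` to `q` in `P`. -/
noncomputable def rld (P : Set (ℝ × ℝ)) (p q : ℝ × ℝ) : ℕ :=
  sInf {k : ℕ | ∃ f : ℕ → ℝ × ℝ, IsRectPath P p q k f}

/-- A box: a closed axis-aligned rectangle `[a,b] × [c,d]` with `a < b` and `c < d`. -/
def IsBox (B : Set (ℝ × ℝ)) : Prop :=
  ∃ a b c d : ℝ, a < b ∧ c < d ∧ B = Set.Icc a b ×ˢ Set.Icc c d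

/-- The graph of oriented distances `Θ`: the bipartite graph on the (disjoint) union of
the families `H` and `V`, with an edge between `h ∈ H` and `v ∈ V` exactly when
`h ∩ v ≠ ∅`. -/
def thetaGraph (H V : Set (Set (ℝ × ℝ))) :
    SimpleGraph {B : Set (ℝ × ℝ) // B ∈ H ∪ V} where
  Adj x y := x ≠ y ∧
    ((x.1 ∈ H ∧ y.1 ∈ V) ∨ (x.1 ∈ V ∧ y.1 ∈ H)) ∧ (x.1 ∩ y.1).Nonempty
  symm := by
    constructor
    rintro x y ⟨hxy, hor, hne⟩
    refine ⟨hxy.symm, ?_, by rwa [Set.inter_comm]⟩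
    rcases hor with ⟨h1, h2⟩ | ⟨h1, h2⟩
    · exact Or.inr ⟨h2, h1⟩
    · exact Or.inl ⟨h2, h1⟩
  loopless := by constructor; rintro x ⟨hxx, -⟩; exact hxx rfl

/-- The oriented distance `Ô(i,j)`: the graph distance in `Θ` plus one. -/
noncomputable def oDist (H V : Set (Set (ℝ × ℝ)))
    (i j : {B : Set (ℝ × ℝ) // B ∈ H ∪ V}) : ℕ :=
  (thetaGraph H V).dist i j + 1

/-- `H` and `V` form a good decomposition of `P`: they are finite families of boxes
contained in `P`; every horizontal (resp. vertical) segment contained in `P` lies in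
some member of `H` (resp. `V`); for `h ∈ H` and `v ∈ V` meeting each other, `h ∩ v`
is the product of the `x`-projection of `v` with the `y`-projection of `h`; and the
graph of oriented distances is connected. -/
structure GoodDecomp (P : Set (ℝ × ℝ)) (H V : Set (Set (ℝ × ℝ))) : Prop where
  finH : H.Finite
  finV : V.Finite
  box : ∀ B ∈ H ∪ V, IsBox B
  sub : ∀ B ∈ H ∪ V, B ⊆ P
  covH : ∀ p q : ℝ × ℝ, p.2 = q.2 → segment ℝ p q ⊆ P → ∃ h ∈ H, segment ℝ p q ⊆ h
  covV : ∀ p q : ℝ × ℝ, p.1 = q.1 → segment ℝ p q ⊆ P → ∃ v ∈ V, segment ℝ p q ⊆ v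
  cross : ∀ h ∈ H, ∀ v ∈ V, (h ∩ v).Nonempty →
    h ∩ v = (Prod.fst '' v) ×ˢ (Prod.snd '' h)
  conn : (thetaGraph H V).Connected

/-!
A walk of length `n` from `i` to `j` in `Θ` yields a rectilinear path with `n + 1` links from any
point of `i` to any point of `j`: by the crossing property, for consecutive boxes `h ∈ H`,
`v ∈ V` and points `r ∈ h`, `q ∈ v`, the corner `(q.1, r.2)` lies in `h ∩ v`, so one turns there.
Conversely, merging consecutive collinear links of a rectilinear path and covering each link by a
box of the matching family gives consecutive boxes that share a point and lie in different
families, hence are equal or adjacent in `Θ`. Separation of `p` and `q` rules out the walk of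
length `0`, for which one link need not suffice.
-/

open SimpleGraph

def IsLink (P : Set (ℝ × ℝ)) (a b : ℝ × ℝ) : Prop :=
  segment ℝ a b ⊆ P ∧ AxisParallel a b

/-- Reachability by a rectilinear path with exactly `k` links; unlike `IsRectPath`, it allows
`k = 0`. -/
inductive RectReach (P : Set (ℝ × ℝ)) : ℕ → ℝ × ℝ → ℝ × ℝ → Prop
  | refl (p : ℝ × ℝ) : RectReach P 0 p p
  | cons {k : ℕ} {p a q : ℝ × ℝ} : IsLink P p a → RectReach P k a q → RectReach P (k + 1) p q

section RectReach

variable {P : Set (ℝ × ℝ)}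

theorem rectReach_of_isLink {k : ℕ} (f : ℕ → ℝ × ℝ) (hf : ∀ t < k, IsLink P (f t) (f (t + 1))) :
    RectReach P k (f 0) (f k) := by
  induction k generalizing f with
  | zero => exact .refl _
  | succ k ih =>
    exact .cons (hf 0 k.succ_pos) (ih (fun n => f (n + 1)) fun t ht => hf (t + 1) (by omega))

theorem RectReach.exists_isLink {k : ℕ} {p q : ℝ × ℝ} (h : RectReach P k p q) :
    ∃ f : ℕ → ℝ × ℝ, f 0 = p ∧ f k = q ∧ ∀ t < k, IsLink P (f t) (f (t + 1)) := by
  induction h with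
  | refl p => exact ⟨fun _ => p, rfl, rfl, fun _ ht => absurd ht (Nat.not_lt_zero _)⟩
  | @cons k p a q hpa _ ih =>
    obtain ⟨f, rfl, rfl, hf⟩ := ih
    refine ⟨fun n => Nat.casesOn n p f, rfl, rfl, fun t ht => ?_⟩
    cases t with
    | zero => exact hpa
    | succ t => exact hf t (by omega)

theorem exists_isRectPath_iff {p q : ℝ × ℝ} {k : ℕ} :
    (∃ f, IsRectPath P p q k f) ↔ 1 ≤ k ∧ RectReach P k p q := by
  constructor
  · rintro ⟨f, hk, rfl, rfl, hf⟩
    exact ⟨hk, rectReach_of_isLink f hf⟩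
  · rintro ⟨hk, h⟩
    obtain ⟨f, hp, hq, hf⟩ := h.exists_isLink
    exact ⟨f, hk, hp, hq, hf⟩

end RectReach

/-- `Aligned true` is horizontal and `Aligned false` vertical alignment; the boxes covering
links of orientation `o` form the family `cond o H V`. -/
def Aligned : Bool → ℝ × ℝ → ℝ × ℝ → Prop
  | true, p, q => p.2 = q.2
  | false, p, q => p.1 = q.1

section Aligned

variable {o : Bool} {a b c : ℝ × ℝ}

theorem Aligned.trans (hab : Aligned o a b) (hbc : Aligned o b c) : Aligned o a c := by
  cases o <;> exact Eq.trans hab hbc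

theorem Aligned.axisParallel (h : Aligned o a b) : AxisParallel a b := by
  cases o
  · exact Or.inr h
  · exact Or.inl h

theorem AxisParallel.exists_aligned (h : AxisParallel a b) : ∃ o, Aligned o a b :=
  h.elim (fun h => ⟨true, h⟩) (fun h => ⟨false, h⟩)

theorem AxisParallel.aligned_not (h : AxisParallel a b) (hn : ¬ Aligned o a b) :
    Aligned (!o) a b := by
  cases o
  · exact h.resolve_right hn
  · exact h.resolve_left hn

theorem segment_subset_union_of_aligned (hab : Aligned o a b) (hbc : Aligned o b c) :
    segment ℝ a c ⊆ segment ℝ a b ∪ segment ℝ b c := by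
  obtain ⟨a₁, a₂⟩ := a
  obtain ⟨b₁, b₂⟩ := b
  obtain ⟨c₁, c₂⟩ := c
  cases o
  · change a₁ = b₁ at hab
    change b₁ = c₁ at hbc
    subst hab hbc
    simp only [← Prod.image_mk_segment_right, ← Set.image_union, segment_eq_uIcc]
    exact Set.image_mono Set.uIcc_subset_uIcc_union_uIcc
  · change a₂ = b₂ at hab
    change b₂ = c₂ at hbc
    subst hab hbc
    simp only [← Prod.image_mk_segment_left, ← Set.image_union, segment_eq_uIcc]
    exact Set.image_mono Set.uIcc_subset_uIcc_union_uIcc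

theorem IsLink.trans_of_aligned {P : Set (ℝ × ℝ)} (hab : IsLink P a b) (hbc : IsLink P b c)
    (hab' : Aligned o a b) (hbc' : Aligned o b c) : IsLink P a c :=
  ⟨(segment_subset_union_of_aligned hab' hbc').trans (Set.union_subset hab.1 hbc.1),
    (hab'.trans hbc').axisParallel⟩

end Aligned

theorem thetaGraph_dist_le_one {H V : Set (Set (ℝ × ℝ))} {o : Bool}
    {i j : {B : Set (ℝ × ℝ) // B ∈ H ∪ V}} (hi : i.1 ∈ cond o H V) (hj : j.1 ∈ cond (!o) H V)
    (hij : (i.1 ∩ j.1).Nonempty) : (thetaGraph H V).dist i j ≤ 1 := by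
  by_cases heq : i = j
  · simp [heq]
  refine (dist_eq_one_iff_adj (G := thetaGraph H V).2 ⟨heq, ?_, hij⟩).le
  cases o
  · exact Or.inr ⟨hi, hj⟩
  · exact Or.inl ⟨hi, hj⟩

namespace GoodDecomp

variable {P : Set (ℝ × ℝ)} {H V : Set (Set (ℝ × ℝ))} (hg : GoodDecomp P H V)
include hg

theorem isLink_of_mem {B : Set (ℝ × ℝ)} (hB : B ∈ H ∪ V) {a b : ℝ × ℝ} (ha : a ∈ B) (hb : b ∈ B)
    (hab : AxisParallel a b) : IsLink P a b := by
  obtain ⟨x₁, x₂, y₁, y₂, -, -, rfl⟩ := hg.box B hB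
  exact ⟨(((convex_Icc x₁ x₂).prod (convex_Icc y₁ y₂)).segment_subset ha hb).trans
    (hg.sub _ hB), hab⟩

theorem exists_segment_subset {o : Bool} {a b : ℝ × ℝ} (hP : segment ℝ a b ⊆ P)
    (hab : Aligned o a b) :
    ∃ i : {B : Set (ℝ × ℝ) // B ∈ H ∪ V}, i.1 ∈ cond o H V ∧ segment ℝ a b ⊆ i.1 := by
  cases o
  · obtain ⟨B, hB, hsub⟩ := hg.covV a b hab hP
    exact ⟨⟨B, Or.inr hB⟩, hB, hsub⟩
  · obtain ⟨B, hB, hsub⟩ := hg.covH a b hab hP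
    exact ⟨⟨B, Or.inl hB⟩, hB, hsub⟩

theorem exists_corner {i j : {B : Set (ℝ × ℝ) // B ∈ H ∪ V}} (hij : (thetaGraph H V).Adj i j)
    {r q : ℝ × ℝ} (hr : r ∈ i.1) (hq : q ∈ j.1) :
    ∃ c ∈ i.1 ∩ j.1, AxisParallel r c ∧ AxisParallel c q := by
  obtain ⟨-, ⟨hiH, hjV⟩ | ⟨hiV, hjH⟩, hne⟩ := hij
  · refine ⟨(q.1, r.2), ?_, Or.inl rfl, Or.inr rfl⟩
    rw [hg.cross _ hiH _ hjV hne]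
    exact ⟨⟨q, hq, rfl⟩, r, hr, rfl⟩
  · refine ⟨(r.1, q.2), ?_, Or.inr rfl, Or.inl rfl⟩
    rw [Set.inter_comm, hg.cross _ hjH _ hiV (Set.inter_comm i.1 j.1 ▸ hne)]
    exact ⟨⟨r, hr, rfl⟩, q, hq, rfl⟩

theorem rectReach_of_walk {i j : {B : Set (ℝ × ℝ) // B ∈ H ∪ V}} (W : (thetaGraph H V).Walk i j)
    (hW : W.length ≠ 0) {r q : ℝ × ℝ} (hr : r ∈ i.1) (hq : q ∈ j.1) :
    RectReach P (W.length + 1) r q := by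
  induction W generalizing r with
  | nil => exact absurd rfl hW
  | @cons i i' j hadj W ih =>
    by_cases hW' : W.length = 0
    · obtain rfl := Walk.eq_of_length_eq_zero hW'
      obtain ⟨c, ⟨hci, hcj⟩, hrc, hcq⟩ := hg.exists_corner hadj hr hq
      rw [Walk.length_cons, hW']
      exact .cons (hg.isLink_of_mem i.2 hr hci hrc)
        (.cons (hg.isLink_of_mem i'.2 hcj hq hcq) (.refl q))
    · obtain ⟨z, -, hz⟩ := hadj.2.2
      obtain ⟨c, ⟨hci, hci'⟩, hrc, -⟩ := hg.exists_corner hadj hr hz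
      exact .cons (hg.isLink_of_mem i.2 hr hci hrc) (ih hW' hci' hq)

/-- The induction runs over both orientations `o` of the first link `p a`, so that a link can
be merged with the next one when they have the same orientation. -/
theorem exists_dist_le_of_isLink_rectReach {k : ℕ} {a q : ℝ × ℝ} (h : RectReach P k a q) :
    ∀ {p : ℝ × ℝ} {o : Bool}, IsLink P p a → Aligned o p a →
      ∃ i j : {B : Set (ℝ × ℝ) // B ∈ H ∪ V}, i.1 ∈ cond o H V ∧ p ∈ i.1 ∧ q ∈ j.1 ∧
        (thetaGraph H V).dist i j ≤ k := by
  induction h with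
  | refl a =>
    intro p o hpa hpa'
    obtain ⟨i, hi, hsub⟩ := hg.exists_segment_subset hpa.1 hpa'
    exact ⟨i, i, hi, hsub (left_mem_segment ℝ p a), hsub (right_mem_segment ℝ p a),
      SimpleGraph.dist_self.le⟩
  | @cons k a b q hab _ ih =>
    intro p o hpa hpa'
    by_cases hab' : Aligned o a b
    · obtain ⟨i, j, hi, hpi, hqj, hij⟩ := ih (hpa.trans_of_aligned hab hpa' hab') (hpa'.trans hab')
      exact ⟨i, j, hi, hpi, hqj, hij.trans k.le_succ⟩
    · obtain ⟨i', j, hi', hai', hqj, hi'j⟩ := ih hab (hab.2.aligned_not hab')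
      obtain ⟨i, hi, hsub⟩ := hg.exists_segment_subset hpa.1 hpa'
      refine ⟨i, j, hi, hsub (left_mem_segment ℝ p a), hqj, ?_⟩
      have hii' := thetaGraph_dist_le_one hi hi' ⟨a, hsub (right_mem_segment ℝ p a), hai'⟩
      calc (thetaGraph H V).dist i j
          ≤ (thetaGraph H V).dist i i' + (thetaGraph H V).dist i' j := hg.conn.dist_triangle
        _ ≤ k + 1 := by omega

theorem exists_oDist_le_of_rectReach {k : ℕ} {p q : ℝ × ℝ} (h : RectReach P k p q)
    (hk : 1 ≤ k) :
    ∃ i j : {B : Set (ℝ × ℝ) // B ∈ H ∪ V}, p ∈ i.1 ∧ q ∈ j.1 ∧ oDist H V i j ≤ k := by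
  cases h with
  | refl => omega
  | cons hpa haq =>
    obtain ⟨o, hpa'⟩ := hpa.2.exists_aligned
    obtain ⟨i, j, -, hpi, hqj, hij⟩ := hg.exists_dist_le_of_isLink_rectReach haq hpa hpa'
    exact ⟨i, j, hpi, hqj, Nat.succ_le_succ hij⟩

theorem rectReach_oDist {p q : ℝ × ℝ} (hsep : ¬ ∃ B ∈ H ∪ V, p ∈ B ∧ q ∈ B)
    {i j : {B : Set (ℝ × ℝ) // B ∈ H ∪ V}} (hpi : p ∈ i.1) (hqj : q ∈ j.1) :
    RectReach P (oDist H V i j) p q := by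
  obtain ⟨W, hW⟩ := hg.conn.exists_walk_length_eq_dist i j
  have hW0 : W.length ≠ 0 := fun h0 => by
    obtain rfl := Walk.eq_of_length_eq_zero h0
    exact hsep ⟨i.1, i.2, hpi, hqj⟩
  rw [oDist, ← hW]
  exact hg.rectReach_of_walk W hW0 hpi hqj

end GoodDecomp

theorem rld_eq_min_oDist_general (P : Set (ℝ × ℝ)) (H V : Set (Set (ℝ × ℝ)))
    (hgood : GoodDecomp P H V)
    (p q : ℝ × ℝ)
    (hsep : ¬ ∃ B ∈ H ∪ V, p ∈ B ∧ q ∈ B) :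
    rld P p q = sInf {m : ℕ | ∃ i j : {B : Set (ℝ × ℝ) // B ∈ H ∪ V},
      p ∈ i.1 ∧ q ∈ j.1 ∧ oDist H V i j = m} := by
  refine csInf_eq_csInf_of_forall_exists_le ?_ ?_
  · intro k hk
    obtain ⟨hk1, h⟩ := exists_isRectPath_iff.1 hk
    obtain ⟨i, j, hpi, hqj, hij⟩ := hgood.exists_oDist_le_of_rectReach h hk1
    exact ⟨_, ⟨i, j, hpi, hqj, rfl⟩, hij⟩
  · rintro _ ⟨i, j, hpi, hqj, rfl⟩
    exact ⟨_, exists_isRectPath_iff.2 ⟨Nat.le_add_left 1 _,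
      hgood.rectReach_oDist hsep hpi hqj⟩, le_rfl⟩

/-- If no single member of `H ∪ V` contains both `p` and `q`, then
`rld(p,q) = min{ Ô(i,j) : i, j ∈ H ∪ V, p ∈ i, q ∈ j }`. -/
theorem rld_eq_min_oDist (P : Set (ℝ × ℝ)) (H V : Set (Set (ℝ × ℝ)))
    (hgood : GoodDecomp P H V)
    (p q : ℝ × ℝ) (hp : p ∈ P) (hq : q ∈ P)
    (hsep : ¬ ∃ B ∈ H ∪ V, p ∈ B ∧ q ∈ B) :
    rld P p q = sInf {m : ℕ | ∃ i j : {B : Set (ℝ × ℝ) // B ∈ H ∪ V},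
      p ∈ i.1 ∧ q ∈ j.1 ∧ oDist H V i j = m} :=
  rld_eq_min_oDist_general P H V hgood p q hsep
end

section
/- Assume P, H, V, Θ and Ô are as in the context, and assume additionally the generic-points property: for every h ∈ H and v ∈ V with h ∩ v ≠ ∅ there exists a point of h ∩ v belonging to no member of H ∪ V other than h and v. Then there exist p, q ∈ P with rld(p,q) ≥ ôdiam − 2, where ôdiam is the maximum of Ô(i,j) over all vertices i, j of Θ; consequently diam(P) ≥ ôdiam − 2. -/
/-- `ôdiam`: the maximum of `Ô(i,j)` over all vertices `i, j` of `Θ`. -/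
noncomputable def oDiamTheta (H V : Set (Set (ℝ × ℝ))) : ℕ :=
  sSup {m : ℕ | ∃ i j : {B : Set (ℝ × ℝ) // B ∈ H ∪ V}, oDist H V i j = m}

/-- `diam(P)`: the supremum of `rld(p,q)` over all `p, q ∈ P`. -/
noncomputable def rldDiam (P : Set (ℝ × ℝ)) : ℕ :=
  sSup {m : ℕ | ∃ p ∈ P, ∃ q ∈ P, rld P p q = m}

/-!
Cover each link of a shortest rectilinear path from `p` to `q` by a box of `H` if it is
horizontal and of `V` otherwise. A shortest path has no two consecutive links on a common
axis-parallel line (they could be merged), so consecutive boxes alternate between `H` and `V`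
and share a point: they are equal or adjacent in `Θ`, and the boxes at the two ends of the path
are at distance less than `rld p q`. Now take `i`, `j` realizing the diameter of `Θ` and let
`p ∈ i`, `q ∈ j` be generic points; every box containing `p` is `i` or a neighbour of `i`, and
likewise for `q`, so `dist i j ≤ rld p q + 1`.
-/

open SimpleGraph

lemma AffineMap.segment_subset_union {𝕜 E : Type*} [Field 𝕜] [LinearOrder 𝕜]
    [IsStrictOrderedRing 𝕜] [AddCommGroup E] [Module 𝕜 E] (L : 𝕜 →ᵃ[𝕜] E) (a b c : 𝕜) :
    segment 𝕜 (L a) (L c) ⊆ segment 𝕜 (L a) (L b) ∪ segment 𝕜 (L b) (L c) := by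
  have := Set.image_mono (f := L) (Set.uIcc_subset_uIcc_union_uIcc (a := a) (b := b) (c := c))
  simpa only [Set.image_union, ← segment_eq_uIcc, image_segment] using this

def OnAxisLine (p q r : ℝ × ℝ) : Prop := (p.2 = q.2 ∧ q.2 = r.2) ∨ (p.1 = q.1 ∧ q.1 = r.1)

lemma OnAxisLine.segment_subset_union {p q r : ℝ × ℝ} (h : OnAxisLine p q r) :
    segment ℝ p r ⊆ segment ℝ p q ∪ segment ℝ q r := by
  rcases h with ⟨hpq, hqr⟩ | ⟨hpq, hqr⟩
  · let L : ℝ →ᵃ[ℝ] ℝ × ℝ := AffineMap.lineMap (0, p.2) (1, p.2)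
    have hL : ∀ x : ℝ × ℝ, x.2 = p.2 → L x.1 = x := by
      intro x hx; ext <;> simp [L, AffineMap.lineMap_apply, hx]
    rw [← hL p rfl, ← hL q hpq.symm, ← hL r (hpq.trans hqr).symm]
    exact L.segment_subset_union _ _ _
  · let L : ℝ →ᵃ[ℝ] ℝ × ℝ := AffineMap.lineMap (p.1, 0) (p.1, 1)
    have hL : ∀ x : ℝ × ℝ, x.1 = p.1 → L x.2 = x := by
      intro x hx; ext <;> simp [L, AffineMap.lineMap_apply, hx]
    rw [← hL p rfl, ← hL q hpq.symm, ← hL r (hpq.trans hqr).symm]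
    exact L.segment_subset_union _ _ _

lemma OnAxisLine.axisParallel {p q r : ℝ × ℝ} (h : OnAxisLine p q r) : AxisParallel p r :=
  h.imp (fun h ↦ h.1.trans h.2) (fun h ↦ h.1.trans h.2)

lemma IsBox.nonempty {B : Set (ℝ × ℝ)} (hB : IsBox B) : B.Nonempty := by
  obtain ⟨a, b, c, d, hab, hcd, rfl⟩ := hB
  exact ⟨(a, c), ⟨le_rfl, hab.le⟩, ⟨le_rfl, hcd.le⟩⟩

lemma IsBox.segment_corner_subset {B : Set (ℝ × ℝ)} (hB : IsBox B) {p q : ℝ × ℝ}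
    (hp : p ∈ B) (hq : q ∈ B) :
    segment ℝ p (q.1, p.2) ⊆ B ∧ segment ℝ (q.1, p.2) q ⊆ B := by
  obtain ⟨a, b, c, d, -, -, rfl⟩ := hB
  have hconv : Convex ℝ (Set.Icc a b ×ˢ Set.Icc c d) := (convex_Icc a b).prod (convex_Icc c d)
  have hcorner : (q.1, p.2) ∈ Set.Icc a b ×ˢ Set.Icc c d := ⟨hq.1, hp.2⟩
  exact ⟨hconv.segment_subset hp hcorner, hconv.segment_subset hcorner hq⟩

section RectPath

variable {P : Set (ℝ × ℝ)} {p q r : ℝ × ℝ} {k : ℕ} {f : ℕ → ℝ × ℝ}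

lemma IsRectPath.single (hs : segment ℝ p q ⊆ P) (hpq : AxisParallel p q) :
    IsRectPath P p q 1 (fun t ↦ if t = 0 then p else q) := by
  refine ⟨le_rfl, rfl, rfl, fun t ht ↦ ?_⟩
  obtain rfl : t = 0 := by omega
  exact ⟨hs, hpq⟩

lemma IsRectPath.cons (hs : segment ℝ p r ⊆ P) (hpr : AxisParallel p r)
    (hf : IsRectPath P r q k f) :
    IsRectPath P p q (k + 1) (fun t ↦ if t = 0 then p else f (t - 1)) := by
  obtain ⟨-, hf0, hfk, hlinks⟩ := hf
  refine ⟨by omega, rfl, by simpa using hfk, fun t ht ↦ ?_⟩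
  rcases t with _ | t
  · simpa [hf0] using And.intro hs hpr
  · simpa using hlinks t (by omega)

/-- Deleting the vertex `f (t + 1)`. -/
lemma IsRectPath.skip (hf : IsRectPath P p q k f) {t : ℕ} (ht : t + 2 ≤ k)
    (hline : OnAxisLine (f t) (f (t + 1)) (f (t + 2))) :
    IsRectPath P p q (k - 1) (fun s ↦ f (if s ≤ t then s else s + 1)) := by
  obtain ⟨-, hf0, hfk, hlinks⟩ := hf
  refine ⟨by omega, by simpa using hf0, by
    simp only [if_neg (show ¬ k - 1 ≤ t by omega), Nat.sub_add_cancel (show 1 ≤ k by omega), hfk],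
    fun s hs ↦ ?_⟩
  rcases lt_trichotomy s t with hst | rfl | hst
  · simpa [hst.le, Nat.succ_le_of_lt hst] using hlinks s (by omega)
  · have h₁ := hlinks s (by omega)
    have h₂ := hlinks (s + 1) (by omega)
    simp only [le_refl, if_true, Nat.not_succ_le_self, if_false]
    exact ⟨hline.segment_subset_union.trans (Set.union_subset h₁.1 h₂.1), hline.axisParallel⟩
  · simpa [hst.not_ge, show ¬ s + 1 ≤ t by omega] using hlinks (s + 1) (by omega)

lemma rld_le (hf : IsRectPath P p q k f) : rld P p q ≤ k :=
  Nat.sInf_le ⟨f, hf⟩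

lemma exists_rectPath_rld_not_onAxisLine (hf : IsRectPath P p q k f) :
    ∃ g, IsRectPath P p q (rld P p q) g ∧
      ∀ t, t + 2 ≤ rld P p q → ¬ OnAxisLine (g t) (g (t + 1)) (g (t + 2)) := by
  obtain ⟨g, hg⟩ : ∃ g, IsRectPath P p q (rld P p q) g :=
    Nat.sInf_mem (s := {n | ∃ g, IsRectPath P p q n g}) ⟨k, f, hf⟩
  refine ⟨g, hg, fun t ht hline ↦ ?_⟩
  have := rld_le (hg.skip ht hline)
  omega

end RectPath

lemma SimpleGraph.Connected.dist_le_of_forall_dist_le_one {α : Type*} {G : SimpleGraph α}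
    (hG : G.Connected) (B : ℕ → α) :
    ∀ n, (∀ t < n, G.dist (B t) (B (t + 1)) ≤ 1) → G.dist (B 0) (B n) ≤ n
  | 0, _ => by simp
  | n + 1, h => by
    have ih := hG.dist_le_of_forall_dist_le_one B n (fun t ht ↦ h t (by omega))
    have := hG.dist_triangle (u := B 0) (v := B n) (w := B (n + 1))
    have := h n (by omega)
    omega

lemma thetaGraph_dist_le_one_s11 {H V : Set (Set (ℝ × ℝ))}
    {x y : {B : Set (ℝ × ℝ) // B ∈ H ∪ V}}
    (hx : x.1 ∈ H) (hy : y.1 ∈ V) (hxy : (x.1 ∩ y.1).Nonempty) :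
    (thetaGraph H V).dist x y ≤ 1 := by
  by_cases h : x = y
  · simp [h]
  · have hadj : (thetaGraph H V).Adj x y := ⟨h, Or.inl ⟨hx, hy⟩, hxy⟩
    exact (dist_eq_one_iff_adj.mpr hadj).le

def GenericPoints (H V : Set (Set (ℝ × ℝ))) : Prop :=
  ∀ h ∈ H, ∀ v ∈ V, (h ∩ v).Nonempty → ∃ x ∈ h ∩ v, ∀ B ∈ H ∪ V, x ∈ B → B = h ∨ B = v

lemma GenericPoints.exists_of_adj {H V : Set (Set (ℝ × ℝ))} (hgen : GenericPoints H V)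
    {u v : {B : Set (ℝ × ℝ) // B ∈ H ∪ V}} (huv : (thetaGraph H V).Adj u v) :
    ∃ x ∈ u.1, ∀ A : {B : Set (ℝ × ℝ) // B ∈ H ∪ V}, x ∈ A.1 → A = u ∨ A = v := by
  obtain ⟨-, ⟨hu, hv⟩ | ⟨hu, hv⟩, hne⟩ := huv
  · obtain ⟨x, hx, hxg⟩ := hgen u.1 hu v.1 hv hne
    exact ⟨x, hx.1, fun A hA ↦ (hxg A.1 A.2 hA).imp Subtype.ext Subtype.ext⟩
  · obtain ⟨x, hx, hxg⟩ := hgen v.1 hv u.1 hu (Set.inter_comm u.1 v.1 ▸ hne)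
    exact ⟨x, hx.2, fun A hA ↦ ((hxg A.1 A.2 hA).imp Subtype.ext Subtype.ext).symm⟩

namespace GoodDecomp

variable {P : Set (ℝ × ℝ)} {H V : Set (Set (ℝ × ℝ))} {p q : ℝ × ℝ}

lemma exists_rectPath_of_walk (hD : GoodDecomp P H V)
    {u v : {B : Set (ℝ × ℝ) // B ∈ H ∪ V}}
    (w : (thetaGraph H V).Walk u v) (hp : p ∈ u.1) (hq : q ∈ v.1) :
    ∃ f, IsRectPath P p q (2 * w.length + 2) f := by
  induction w generalizing p with
  | @nil u =>
    obtain ⟨h₁, h₂⟩ := (hD.box _ u.2).segment_corner_subset hp hq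
    exact ⟨_, .cons (h₁.trans (hD.sub _ u.2)) (Or.inl rfl)
      (.single (h₂.trans (hD.sub _ u.2)) (Or.inr rfl))⟩
  | @cons u u' v huu' w ih =>
    obtain ⟨x, hxu, hxu'⟩ := huu'.2.2
    obtain ⟨h₁, h₂⟩ := (hD.box _ u.2).segment_corner_subset hp hxu
    obtain ⟨f, hf⟩ := ih hxu' hq
    rw [Walk.length_cons, show 2 * (w.length + 1) + 2 = 2 * w.length + 2 + 1 + 1 by ring]
    exact ⟨_, .cons (h₁.trans (hD.sub _ u.2)) (Or.inl rfl)
      (.cons (h₂.trans (hD.sub _ u.2)) (Or.inr rfl) hf)⟩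

lemma exists_mem_vertex (hD : GoodDecomp P H V) (hp : p ∈ P) :
    ∃ A : {B : Set (ℝ × ℝ) // B ∈ H ∪ V}, p ∈ A.1 := by
  obtain ⟨h, hH, hph⟩ := hD.covH p p rfl (by simpa using hp)
  exact ⟨⟨h, Or.inl hH⟩, hph (left_mem_segment ℝ p p)⟩

lemma exists_vertex_segment_subset (hD : GoodDecomp P H V) {a b : ℝ × ℝ}
    (hs : segment ℝ a b ⊆ P) (hab : AxisParallel a b) :
    ∃ A : {B : Set (ℝ × ℝ) // B ∈ H ∪ V}, segment ℝ a b ⊆ A.1 ∧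
      (a.2 = b.2 → A.1 ∈ H) ∧ (a.2 ≠ b.2 → A.1 ∈ V) := by
  by_cases hy : a.2 = b.2
  · obtain ⟨h, hH, hsh⟩ := hD.covH a b hy hs
    exact ⟨⟨h, Or.inl hH⟩, hsh, fun _ ↦ hH, fun h ↦ absurd hy h⟩
  · obtain ⟨v, hV, hsv⟩ := hD.covV a b (hab.resolve_left hy) hs
    exact ⟨⟨v, Or.inr hV⟩, hsv, fun h ↦ absurd h hy, fun _ ↦ hV⟩

/-- Along a path without three consecutive vertices on an axis-parallel line, the boxes
covering consecutive links alternate between `H` and `V`. -/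
lemma exists_dist_lt_of_not_onAxisLine (hD : GoodDecomp P H V) {k : ℕ} {f : ℕ → ℝ × ℝ}
    (hf : IsRectPath P p q k f)
    (halt : ∀ t, t + 2 ≤ k → ¬ OnAxisLine (f t) (f (t + 1)) (f (t + 2))) :
    ∃ A C : {B : Set (ℝ × ℝ) // B ∈ H ∪ V}, p ∈ A.1 ∧ q ∈ C.1 ∧
      (thetaGraph H V).dist A C < k := by
  obtain ⟨hk, hf0, hfk, hlinks⟩ := hf
  have := hD.conn.nonempty
  choose! B hBseg hBH hBV using
    fun t (ht : t < k) ↦ hD.exists_vertex_segment_subset (hlinks t ht).1 (hlinks t ht).2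
  have hchain : ∀ t < k - 1, (thetaGraph H V).dist (B t) (B (t + 1)) ≤ 1 := by
    intro t ht
    have hmem : f (t + 1) ∈ (B t).1 ∩ (B (t + 1)).1 :=
      ⟨hBseg t (by omega) (right_mem_segment ℝ _ _),
        hBseg (t + 1) (by omega) (left_mem_segment ℝ _ _)⟩
    have hnot := halt t (by omega)
    by_cases hy : (f t).2 = (f (t + 1)).2
    · have hy' : (f (t + 1)).2 ≠ (f (t + 2)).2 := fun h ↦ hnot (Or.inl ⟨hy, h⟩)
      exact thetaGraph_dist_le_one_s11 (hBH t (by omega) hy) (hBV (t + 1) (by omega) hy') ⟨_, hmem⟩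
    · have hx : (f t).1 = (f (t + 1)).1 := (hlinks t (by omega)).2.resolve_left hy
      have hy' : (f (t + 1)).2 = (f (t + 2)).2 :=
        (hlinks (t + 1) (by omega)).2.resolve_right fun h ↦ hnot (Or.inr ⟨hx, h⟩)
      rw [dist_comm]
      exact thetaGraph_dist_le_one_s11 (hBH (t + 1) (by omega) hy') (hBV t (by omega) hy)
        ⟨_, hmem.symm⟩
  refine ⟨B 0, B (k - 1), hf0 ▸ hBseg 0 (by omega) (left_mem_segment ℝ _ _), ?_,
    (hD.conn.dist_le_of_forall_dist_le_one B (k - 1) hchain).trans_lt (by omega)⟩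
  have := hBseg (k - 1) (by omega) (right_mem_segment ℝ _ _)
  rwa [Nat.sub_add_cancel hk, hfk] at this

lemma exists_dist_lt_rld (hD : GoodDecomp P H V)
    {u v : {B : Set (ℝ × ℝ) // B ∈ H ∪ V}}
    (hp : p ∈ u.1) (hq : q ∈ v.1) :
    ∃ A C : {B : Set (ℝ × ℝ) // B ∈ H ∪ V}, p ∈ A.1 ∧ q ∈ C.1 ∧
      (thetaGraph H V).dist A C < rld P p q := by
  obtain ⟨f, hf⟩ := hD.exists_rectPath_of_walk (hD.conn.preconnected u v).some hp hq
  obtain ⟨g, hg, halt⟩ := exists_rectPath_rld_not_onAxisLine hf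
  exact hD.exists_dist_lt_of_not_onAxisLine hg halt

lemma exists_mem_forall_dist_le_one (hD : GoodDecomp P H V) (hgen : GenericPoints H V)
    (i : {B : Set (ℝ × ℝ) // B ∈ H ∪ V}) :
    ∃ p ∈ i.1, ∀ A : {B : Set (ℝ × ℝ) // B ∈ H ∪ V}, p ∈ A.1 →
      (thetaGraph H V).dist i A ≤ 1 := by
  by_cases hi : ∃ b, (thetaGraph H V).Adj i b
  · obtain ⟨b, hib⟩ := hi
    obtain ⟨x, hxi, hx⟩ := hgen.exists_of_adj hib
    refine ⟨x, hxi, fun A hA ↦ ?_⟩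
    rcases hx A hA with rfl | rfl
    · simp
    · exact (dist_eq_one_iff_adj.mpr hib).le
  · obtain ⟨x, hx⟩ := (hD.box _ i.2).nonempty
    refine ⟨x, hx, fun A _ ↦ ?_⟩
    obtain ⟨w⟩ := hD.conn.preconnected i A
    cases w with
    | nil => simp
    | cons hadj _ => exact absurd ⟨_, hadj⟩ hi

lemma ediam_ne_top (hD : GoodDecomp P H V) : (thetaGraph H V).ediam ≠ ⊤ := by
  have : Finite {B : Set (ℝ × ℝ) // B ∈ H ∪ V} := (hD.finH.union hD.finV).to_subtype
  have := hD.conn.nonempty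
  exact connected_iff_ediam_ne_top.mp hD.conn

lemma oDiamTheta_eq (hD : GoodDecomp P H V) : oDiamTheta H V = (thetaGraph H V).diam + 1 := by
  have := hD.conn.nonempty
  refine IsGreatest.csSup_eq ⟨?_, ?_⟩
  · obtain ⟨i, j, hij⟩ := (thetaGraph H V).exists_dist_eq_diam
    exact ⟨i, j, by rw [oDist, hij]⟩
  · rintro _ ⟨i, j, rfl⟩
    exact Nat.add_le_add_right (dist_le_diam hD.ediam_ne_top) 1

lemma rld_le_rldDiam (hD : GoodDecomp P H V) (hp : p ∈ P) (hq : q ∈ P) :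
    rld P p q ≤ rldDiam P := by
  refine le_csSup ⟨2 * (thetaGraph H V).diam + 2, ?_⟩ ⟨p, hp, q, hq, rfl⟩
  rintro _ ⟨p', hp', q', hq', rfl⟩
  obtain ⟨A, hpA⟩ := hD.exists_mem_vertex hp'
  obtain ⟨C, hqC⟩ := hD.exists_mem_vertex hq'
  obtain ⟨w, hw⟩ := hD.conn.exists_walk_length_eq_dist A C
  obtain ⟨f, hf⟩ := hD.exists_rectPath_of_walk w hpA hqC
  have := dist_le_diam (u := A) (v := C) hD.ediam_ne_top
  have := rld_le hf
  omega

end GoodDecomp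

/-- Under the generic-points property, there exist `p, q ∈ P` with
`rld(p,q) ≥ ôdiam − 2`; consequently `diam(P) ≥ ôdiam − 2`. -/
theorem oDiam_sub_two_le_rld (P : Set (ℝ × ℝ)) (H V : Set (Set (ℝ × ℝ)))
    (hgood : GoodDecomp P H V)
    (hgen : ∀ h ∈ H, ∀ v ∈ V, (h ∩ v).Nonempty →
      ∃ x ∈ h ∩ v, ∀ B ∈ H ∪ V, x ∈ B → B = h ∨ B = v) :
    (∃ p ∈ P, ∃ q ∈ P, oDiamTheta H V - 2 ≤ rld P p q) ∧
      oDiamTheta H V - 2 ≤ rldDiam P := by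
  have := hgood.conn.nonempty
  obtain ⟨i, j, hij⟩ := (thetaGraph H V).exists_dist_eq_diam
  obtain ⟨p, hpi, hp⟩ := hgood.exists_mem_forall_dist_le_one hgen i
  obtain ⟨q, hqj, hq⟩ := hgood.exists_mem_forall_dist_le_one hgen j
  obtain ⟨A, C, hpA, hqC, hAC⟩ := hgood.exists_dist_lt_rld hpi hqj
  have hiA := hp A hpA
  have hCj := dist_comm (G := thetaGraph H V) ▸ hq C hqC
  have hiC := hgood.conn.dist_triangle (u := i) (v := A) (w := C)
  have hij' := hgood.conn.dist_triangle (u := i) (v := C) (w := j)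
  have hbound : oDiamTheta H V - 2 ≤ rld P p q := by
    rw [hgood.oDiamTheta_eq, ← hij]
    omega
  have hpP := hgood.sub _ i.2 hpi
  have hqP := hgood.sub _ j.2 hqj
  exact ⟨⟨p, hpP, q, hqP, hbound⟩, hbound.trans (hgood.rld_le_rldDiam hpP hqP)⟩
end
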